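/- arXiv:1109.4659 — 5 statements merged into one kernel-verified Lean document; each statement's English description precedes it below -/
import Mathlib

section
/- Let N ≥ 1 and n, m ≥ 0 be integers and λ₁, λ₂, λ > 0 real. Define F(t;s) = S_N(λ₁,λ₂,λ;t;s), the deformed Selberg integral, for t ∈ ℂⁿ and s ∈ (ℂ∖[1,∞))^m. Then F satisfies the cancellation condition: for all 1 ≤ i ≤ n and 1 ≤ j ≤ m, at every point with t_i = s_j ∈ ℂ∖[1,∞), one has ∂F/∂t_i + (1/λ)∂F/∂s_j = 0. -/
open MeasureTheory Finset

/-- Partial derivative of `F(t,s)` in the variable `t i`. -/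
noncomputable def pdT {n m : ℕ} (F : (Fin n → ℂ) → (Fin m → ℂ) → ℂ) (i : Fin n)
    (t : Fin n → ℂ) (s : Fin m → ℂ) : ℂ :=
  deriv (fun z => F (Function.update t i z) s) (t i)

/-- Partial derivative of `F(t,s)` in the variable `s j`. -/
noncomputable def pdS {n m : ℕ} (F : (Fin n → ℂ) → (Fin m → ℂ) → ℂ) (j : Fin m)
    (t : Fin n → ℂ) (s : Fin m → ℂ) : ℂ :=
  deriv (fun z => F t (Function.update s j z)) (s j)

/-- The slit complex plane `ℂ ∖ [1,∞)`. -/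
def slitOne : Set ℂ := {z : ℂ | z.im ≠ 0 ∨ z.re < 1}

/-- The Selberg density `∏ xᵢ^{λ₁}(1-xᵢ)^{λ₂} ∏_{j<k} |xⱼ-xₖ|^{2λ}` on `[0,1]^N`. -/
noncomputable def selbergDensity (N : ℕ) (l1 l2 l : ℝ) (x : Fin N → ℝ) : ℝ :=
  (∏ i, (x i) ^ l1 * (1 - x i) ^ l2) *
    ∏ j : Fin N, ∏ k ∈ univ.filter (fun k => j < k), |x j - x k| ^ (2 * l)

/-- The cube `[0,1]^N`. -/
def unitCube (N : ℕ) : Set (Fin N → ℝ) := Set.univ.pi fun _ => Set.Icc (0:ℝ) 1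

/-- The deformed Selberg integral
`S_N(λ₁,λ₂,λ;t;s) = ∫_{[0,1]^N} D(x) ∏_j ∏_k (1-xⱼtₖ) ∏_ℓ (1-xⱼs_ℓ)^{-λ} dx`,
with principal branch powers. -/
noncomputable def deformedSelberg (N n m : ℕ) (l1 l2 l : ℝ)
    (t : Fin n → ℂ) (s : Fin m → ℂ) : ℂ :=
  ∫ x in unitCube N,
    ((selbergDensity N l1 l2 l x : ℝ) : ℂ) *
      ∏ j : Fin N, ((∏ k, (1 - (x j : ℂ) * t k)) *
        ∏ k, (1 - (x j : ℂ) * s k) ^ (-(l : ℂ)))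

/-!
Both partial derivatives may be taken under the integral sign, because near `s j` (inside the slit
plane) the integrand and its derivative are jointly continuous on a compact set. In each
coordinate factor, `t i` enters only through `1 - x t_i` and `s j` only through
`(1 - x s_j)^(-λ)`, with derivatives `-x` and `λ x (1 - x s_j)^(-λ-1)`. When `t_i = s_j = w`,
`(1 - x w)^(-λ-1)` times the cofactor of `(1 - x w)^(-λ)` is exactly the cofactor of `1 - x w`,
so the two integrands differ by the factor `-λ` and `∂F/∂s_j = -λ ∂F/∂t_i`.
-/open Metric Set Function

section ParametricIntegral

variable {𝕜 α E : Type*} [RCLike 𝕜] [TopologicalSpace α] [MeasurableSpace α]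
  [OpensMeasurableSpace α] [NormedAddCommGroup E] [NormedSpace ℝ E] [NormedSpace 𝕜 E]

theorem hasDerivAt_setIntegral_of_continuousOn {μ : Measure α} [IsFiniteMeasureOnCompacts μ]
    {K : Set α} (hK : IsCompact K) (hKm : MeasurableSet K) {G G' : 𝕜 → α → E} {z₀ : 𝕜}
    {ε : ℝ} (hε : 0 < ε) (hG : ContinuousOn (uncurry G) (closedBall z₀ ε ×ˢ K))
    (hG' : ContinuousOn (uncurry G') (closedBall z₀ ε ×ˢ K))
    (hd : ∀ x ∈ K, ∀ z ∈ ball z₀ ε, HasDerivAt (G · x) (G' z x) z) :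
    HasDerivAt (fun z => ∫ x in K, G z x ∂μ) (∫ x in K, G' z₀ x ∂μ) z₀ := by
  have slice : ∀ {H : 𝕜 → α → E}, ContinuousOn (uncurry H) (closedBall z₀ ε ×ˢ K) →
      ∀ z ∈ closedBall z₀ ε, ContinuousOn (H z) K := fun hH z hz =>
    hH.comp (Continuous.prodMk_right z).continuousOn fun x hx => ⟨hz, hx⟩
  have hz₀ : z₀ ∈ closedBall z₀ ε := mem_closedBall_self hε.le
  obtain ⟨C, hC⟩ := ((isCompact_closedBall z₀ ε).prod hK).exists_bound_of_continuousOn hG'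
  refine (hasDerivAt_integral_of_dominated_loc_of_deriv_le (bound := fun _ => C)
    (ball_mem_nhds z₀ hε) ?_ ((slice hG z₀ hz₀).integrableOn_compact' hK hKm)
    ((slice hG' z₀ hz₀).aestronglyMeasurable_of_isCompact hK hKm) ?_
    (integrableOn_const hK.measure_ne_top) ?_).2
  · exact Filter.eventually_of_mem (ball_mem_nhds z₀ hε) fun z hz =>
      (slice hG z (ball_subset_closedBall hz)).aestronglyMeasurable_of_isCompact hK hKm
  · exact (ae_restrict_mem hKm).mono fun x hx z hz => hC (z, x) ⟨ball_subset_closedBall hz, hx⟩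
  · exact (ae_restrict_mem hKm).mono hd

end ParametricIntegral

theorem hasDerivAt_setIntegral_mul_prod {ι : Type*} [Fintype ι] [DecidableEq ι]
    {μ : Measure (ι → ℝ)} [IsFiniteMeasureOnCompacts μ] {I : Set ℝ} (hI : IsCompact I)
    {D : (ι → ℝ) → ℂ} (hD : ContinuousOn D (univ.pi fun _ => I)) {f f' : ℂ → ℝ → ℂ}
    {z₀ : ℂ} {ε : ℝ} (hε : 0 < ε) (hf : ContinuousOn (uncurry f) (closedBall z₀ ε ×ˢ I))
    (hf' : ContinuousOn (uncurry f') (closedBall z₀ ε ×ˢ I))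
    (hd : ∀ c ∈ I, ∀ z ∈ ball z₀ ε, HasDerivAt (f · c) (f' z c) z) :
    HasDerivAt (fun z => ∫ x in univ.pi fun _ => I, D x * ∏ j, f z (x j) ∂μ)
      (∫ x in univ.pi fun _ => I, D x * ∑ j, (∏ k ∈ univ.erase j, f z₀ (x k)) * f' z₀ (x j) ∂μ)
      z₀ := by
  set K : Set (ι → ℝ) := univ.pi fun _ => I
  have coord : ∀ {g : ℂ → ℝ → ℂ}, ContinuousOn (uncurry g) (closedBall z₀ ε ×ˢ I) →
      ∀ j, ContinuousOn (fun p : ℂ × (ι → ℝ) => g p.1 (p.2 j)) (closedBall z₀ ε ×ˢ K) :=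
    fun hg j => hg.comp (f := fun p : ℂ × (ι → ℝ) => (p.1, p.2 j))
      (continuous_fst.prodMk ((continuous_apply j).comp continuous_snd)).continuousOn
      fun p hp => ⟨hp.1, hp.2 j (mem_univ j)⟩
  have hD' : ContinuousOn (fun p : ℂ × (ι → ℝ) => D p.2) (closedBall z₀ ε ×ˢ K) :=
    hD.comp continuous_snd.continuousOn fun p hp => hp.2
  refine hasDerivAt_setIntegral_of_continuousOn (G := fun z x => D x * ∏ j, f z (x j))
    (G' := fun z x => D x * ∑ j, (∏ k ∈ univ.erase j, f z (x k)) * f' z (x j))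
    (isCompact_univ_pi fun _ => hI)
    (MeasurableSet.univ_pi fun _ => hI.measurableSet) hε
    (hD'.mul (continuousOn_finsetProd _ fun j _ => coord hf j))
    (hD'.mul (continuousOn_finsetSum _ fun j _ =>
      (continuousOn_finsetProd _ fun k _ => coord hf k).mul (coord hf' j))) fun x hx z hz => ?_
  have := HasDerivAt.fun_finsetProd (u := univ) fun j _ => hd (x j) (hx j (mem_univ j)) z hz
  simpa using this.const_mul (D x)

theorem Finset.prod_comp_update {ι β M : Type*} [Fintype ι] [DecidableEq ι] [CommMonoid M]
    (g : β → M) (t : ι → β) (i : ι) (z : β) :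
    ∏ k, g (update t i z k) = g z * ∏ k ∈ univ \ {i}, g (t k) := by
  have := Finset.prod_update_of_mem (mem_univ i) (g ∘ t) (g z)
  rwa [← comp_update] at this

theorem isOpen_slitOne : IsOpen slitOne :=
  (isOpen_compl_singleton.preimage Complex.continuous_im).union
    (isOpen_Iio.preimage Complex.continuous_re)

theorem zero_mem_slitOne : (0 : ℂ) ∈ slitOne := Or.inr (by simp)

theorem one_sub_mul_mem_slitPlane {c : ℝ} (hc : c ∈ Icc (0 : ℝ) 1) {z : ℂ} (hz : z ∈ slitOne) :
    1 - (c : ℂ) * z ∈ Complex.slitPlane := by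
  rw [Complex.mem_slitPlane_iff]
  simp only [Complex.sub_re, Complex.one_re, Complex.re_ofReal_mul, Complex.sub_im,
    Complex.one_im, Complex.im_ofReal_mul, zero_sub, ne_eq, neg_eq_zero, mul_eq_zero, not_or]
  obtain ⟨hc0, hc1⟩ := hc
  rcases hz with hz | hz
  · rcases hc0.eq_or_lt with rfl | hc0
    · simp
    · exact Or.inr ⟨hc0.ne', hz⟩
  · left
    rcases le_or_gt z.re 0 with h | h <;> nlinarith

theorem continuous_selbergDensity (N : ℕ) {l1 l2 l : ℝ} (h1 : 0 ≤ l1) (h2 : 0 ≤ l2)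
    (h : 0 ≤ l) : Continuous (selbergDensity N l1 l2 l) := by
  unfold selbergDensity
  apply Continuous.mul
  · exact continuous_finsetProd _ fun a _ =>
      ((Real.continuous_rpow_const h1).comp (continuous_apply a)).mul
        ((Real.continuous_rpow_const h2).comp (continuous_const.sub (continuous_apply a)))
  · exact continuous_finsetProd _ fun a _ => continuous_finsetProd _ fun b _ =>
      (Real.continuous_rpow_const (by positivity)).comp
        ((continuous_apply a).sub (continuous_apply b)).abs

section SelbergFactor

variable {n m : ℕ} {l : ℝ} {t : Fin n → ℂ} {s : Fin m → ℂ}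

/-- The integrand of `deformedSelberg` is, by definition, the density at `x` times
`∏ j, selbergFactor l t s (x j)`; the derivative lemmas below rely on this. -/
noncomputable def selbergFactor (l : ℝ) (t : Fin n → ℂ) (s : Fin m → ℂ) (c : ℝ) : ℂ :=
  (∏ k, (1 - (c : ℂ) * t k)) * ∏ k, (1 - (c : ℂ) * s k) ^ (-(l : ℂ))

theorem selbergFactor_update_left (i : Fin n) (z : ℂ) (c : ℝ) :
    selbergFactor l (update t i z) s c = (1 - c * z) * selbergFactor l (update t i 0) s c := by
  simp only [selbergFactor, Finset.prod_comp_update (fun w : ℂ => 1 - (c : ℂ) * w)]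
  ring

theorem selbergFactor_update_right (j : Fin m) (z : ℂ) (c : ℝ) :
    selbergFactor l t (update s j z) c =
      (1 - c * z) ^ (-(l : ℂ)) * selbergFactor l t (update s j 0) c := by
  simp only [selbergFactor, Finset.prod_comp_update (fun w : ℂ => (1 - (c : ℂ) * w) ^ (-(l : ℂ)))]
  simp only [mul_zero, sub_zero, Complex.one_cpow, one_mul]
  ring

theorem continuousOn_selbergFactor (hs : ∀ k, s k ∈ slitOne) :
    ContinuousOn (selbergFactor l t s) (Icc 0 1) := by
  unfold selbergFactor
  refine (continuousOn_finsetProd _ fun k _ => by fun_prop).mul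
    (continuousOn_finsetProd _ fun k _ => ContinuousOn.cpow_const (by fun_prop) fun c hc => ?_)
  exact one_sub_mul_mem_slitPlane hc (hs k)

end SelbergFactor

section Cancellation

variable {N n m : ℕ} {l1 l2 l : ℝ} {t : Fin n → ℂ} {s : Fin m → ℂ}

theorem hasDerivAt_selbergFactor_update_left (i : Fin n) (c : ℝ) (z : ℂ) :
    HasDerivAt (fun w => selbergFactor l (update t i w) s c)
      (-c * selbergFactor l (update t i 0) s c) z := by
  rw [funext fun w => selbergFactor_update_left (l := l) (s := s) i w c]
  exact ((((hasDerivAt_id' z).const_mul (c : ℂ)).const_sub 1).mul_const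
    (selbergFactor l (update t i 0) s c)).congr_deriv (by ring)

theorem hasDerivAt_selbergFactor_update_right (j : Fin m) {c : ℝ} {z : ℂ}
    (hz : 1 - c * z ∈ Complex.slitPlane) :
    HasDerivAt (fun w => selbergFactor l t (update s j w) c)
      (l * c * (1 - c * z) ^ (-(l : ℂ) - 1) * selbergFactor l t (update s j 0) c) z := by
  rw [funext fun w => selbergFactor_update_right (l := l) (t := t) j w c]
  exact (((((hasDerivAt_id' z).const_mul (c : ℂ)).const_sub 1).cpow_const
    (c := -(l : ℂ)) hz).mul_const (selbergFactor l t (update s j 0) c)).congr_deriv (by ring)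

theorem hasDerivAt_deformedSelberg_update_left (hD : Continuous (selbergDensity N l1 l2 l))
    (hs : ∀ k, s k ∈ slitOne) (i : Fin n) (w : ℂ) :
    HasDerivAt (fun z => deformedSelberg N n m l1 l2 l (update t i z) s)
      (∫ x in unitCube N, (selbergDensity N l1 l2 l x : ℂ) *
        ∑ j, (∏ k ∈ univ.erase j, selbergFactor l (update t i w) s (x k)) *
          (-(x j) * selbergFactor l (update t i 0) s (x j))) w := by
  have ha := continuousOn_selbergFactor (l := l) (t := update t i 0) hs
  refine hasDerivAt_setIntegral_mul_prod isCompact_Icc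
    (Complex.continuous_ofReal.comp hD).continuousOn one_pos ?_ ?_
    fun c _ z _ => hasDerivAt_selbergFactor_update_left i c z
  · refine ContinuousOn.congr (f := fun p : ℂ × ℝ =>
      (1 - p.2 * p.1) * selbergFactor l (update t i 0) s p.2) ?_
      fun p _ => selbergFactor_update_left i p.1 p.2
    exact (by fun_prop : Continuous fun p : ℂ × ℝ => 1 - (p.2 : ℂ) * p.1).continuousOn.mul
      (ha.comp continuous_snd.continuousOn fun p hp => hp.2)
  · exact (by fun_prop : Continuous fun p : ℂ × ℝ => -(p.2 : ℂ)).continuousOn.mul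
      (ha.comp continuous_snd.continuousOn fun p hp => hp.2)

theorem hasDerivAt_deformedSelberg_update_right (hD : Continuous (selbergDensity N l1 l2 l))
    (hs : ∀ k, s k ∈ slitOne) (j : Fin m) {w : ℂ} (hw : w ∈ slitOne) :
    HasDerivAt (fun z => deformedSelberg N n m l1 l2 l t (update s j z))
      (∫ x in unitCube N, (selbergDensity N l1 l2 l x : ℂ) *
        ∑ k, (∏ k' ∈ univ.erase k, selbergFactor l t (update s j w) (x k')) *
          (l * x k * (1 - x k * w) ^ (-(l : ℂ) - 1) * selbergFactor l t (update s j 0) (x k)))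
      w := by
  obtain ⟨δ, hδ, hball⟩ := Metric.isOpen_iff.1 isOpen_slitOne w hw
  have hcb : closedBall w (δ / 2) ⊆ slitOne :=
    (closedBall_subset_ball (by linarith)).trans hball
  have hmem : ∀ p ∈ closedBall w (δ / 2) ×ˢ Icc (0 : ℝ) 1,
      1 - (p.2 : ℂ) * p.1 ∈ Complex.slitPlane := fun p hp =>
    one_sub_mul_mem_slitPlane hp.2 (hcb hp.1)
  have hs₀ : ∀ k, update s j 0 k ∈ slitOne :=
    (forall_update_iff s fun _ z => z ∈ slitOne).2 ⟨zero_mem_slitOne, fun k _ => hs k⟩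
  have ha : ContinuousOn (fun p : ℂ × ℝ => selbergFactor l t (update s j 0) p.2)
      (closedBall w (δ / 2) ×ˢ Icc (0 : ℝ) 1) :=
    (continuousOn_selbergFactor hs₀).comp continuous_snd.continuousOn fun p hp => hp.2
  have hlin : ContinuousOn (fun p : ℂ × ℝ => 1 - (p.2 : ℂ) * p.1)
      (closedBall w (δ / 2) ×ˢ Icc (0 : ℝ) 1) := by fun_prop
  refine hasDerivAt_setIntegral_mul_prod isCompact_Icc
    (Complex.continuous_ofReal.comp hD).continuousOn (half_pos hδ) ?_ ?_
    fun c hc z hz => hasDerivAt_selbergFactor_update_right j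
      (hmem (z, c) ⟨ball_subset_closedBall hz, hc⟩)
  · refine ContinuousOn.congr (f := fun p : ℂ × ℝ =>
      (1 - p.2 * p.1) ^ (-(l : ℂ)) * selbergFactor l t (update s j 0) p.2) ?_
      fun p _ => selbergFactor_update_right j p.1 p.2
    exact (hlin.cpow_const hmem).mul ha
  · exact ((by fun_prop : Continuous fun p : ℂ × ℝ => (l : ℂ) * p.2).continuousOn.mul
      (hlin.cpow_const hmem)).mul ha

theorem cpow_sub_one_mul_selbergFactor_update_right {i : Fin n} {j : Fin m}
    (hij : t i = s j) (hsj : s j ∈ slitOne) {c : ℝ} (hc : c ∈ Icc (0 : ℝ) 1) :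
    (1 - c * s j) ^ (-(l : ℂ) - 1) * selbergFactor l t (update s j 0) c =
      selbergFactor l (update t i 0) s c := by
  have hne : 1 - c * s j ≠ 0 := Complex.slitPlane_ne_zero (one_sub_mul_mem_slitPlane hc hsj)
  have hpow : (1 - c * s j) ^ (-(l : ℂ) - 1) * (1 - c * s j) = (1 - c * s j) ^ (-(l : ℂ)) := by
    conv_rhs => rw [show -(l : ℂ) = (-(l : ℂ) - 1) + 1 by ring, Complex.cpow_add _ _ hne,
      Complex.cpow_one]
  refine mul_left_cancel₀ hne ?_
  calc (1 - c * s j) * ((1 - c * s j) ^ (-(l : ℂ) - 1) * selbergFactor l t (update s j 0) c)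
      = (1 - c * s j) ^ (-(l : ℂ)) * selbergFactor l t (update s j 0) c := by
        rw [← hpow]; ring
    _ = (1 - c * s j) * selbergFactor l (update t i 0) s c := by
        rw [← selbergFactor_update_right, update_eq_self, ← hij, ← selbergFactor_update_left,
          update_eq_self]

end Cancellation

theorem stmt2_general (N n m : ℕ) (l1 l2 l : ℝ)
    (hl1 : 0 < l1) (hl2 : 0 < l2) (hl : 0 < l)
    (t : Fin n → ℂ) (s : Fin m → ℂ)
    (hs : ∀ j, s j ∈ slitOne)
    (i : Fin n) (j : Fin m) (hij : t i = s j) :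
    pdT (deformedSelberg N n m l1 l2 l) i t s
      + (1 / (l : ℂ)) * pdS (deformedSelberg N n m l1 l2 l) j t s = 0 := by
  have hD := continuous_selbergDensity N hl1.le hl2.le hl.le
  have hT := (hasDerivAt_deformedSelberg_update_left (t := t) hD hs i (t i)).deriv
  have hS := (hasDerivAt_deformedSelberg_update_right (t := t) hD hs j (hs j)).deriv
  rw [update_eq_self] at hT hS
  have hST : pdS (deformedSelberg N n m l1 l2 l) j t s =
      -l * pdT (deformedSelberg N n m l1 l2 l) i t s := by
    rw [pdT, pdS, hT, hS, ← integral_const_mul]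
    refine setIntegral_congr_fun (MeasurableSet.univ_pi fun _ => measurableSet_Icc)
      fun x hx => ?_
    simp only [Finset.mul_sum]
    refine Finset.sum_congr rfl fun k _ => ?_
    rw [← cpow_sub_one_mul_selbergFactor_update_right hij (hs j) (hx k (mem_univ k))]
    ring
  have hl' : (l : ℂ) ≠ 0 := Complex.ofReal_ne_zero.2 hl.ne'
  rw [hST]
  field_simp
  ring

/-- the deformed Selberg integral satisfies the cancellation condition
`∂F/∂tᵢ + (1/λ)∂F/∂sⱼ = 0` at every point with `tᵢ = sⱼ ∈ ℂ∖[1,∞)`. -/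
theorem stmt2 (N n m : ℕ) (hN : 1 ≤ N) (l1 l2 l : ℝ)
    (hl1 : 0 < l1) (hl2 : 0 < l2) (hl : 0 < l)
    (t : Fin n → ℂ) (s : Fin m → ℂ)
    (hs : ∀ j, s j ∈ slitOne)
    (i : Fin n) (j : Fin m) (hij : t i = s j) :
    pdT (deformedSelberg N n m l1 l2 l) i t s
      + (1 / (l : ℂ)) * pdS (deformedSelberg N n m l1 l2 l) j t s = 0 :=
  stmt2_general N n m l1 l2 l hl1 hl2 hl t s hs i j hij
end

section
/- Let n, m ≥ 0 be integers, α > 0 real, and a ∈ ℂ. Let Ω ⊆ ℂ^{n+m} be open and let G be holomorphic on Ω satisfying the cancellation property: for all i ≤ n < j ≤ n+m, (ρ_i ∂G/∂w_i − ρ_j ∂G/∂w_j)(w) = 0 whenever w ∈ Ω and w_i = w_j. Define H(w) = ∏_{i=1}^n w_i^{−a} · ∏_{j=1}^m w_{n+j}^{αa} · G(1/w₁,…,1/w_{n+m}) using principal branch powers. Then H satisfies the same cancellation property: for all i ≤ n < j ≤ n+m, (ρ_i ∂H/∂w_i − ρ_j ∂H/∂w_j)(w) = 0 at every point w with all coordinates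 in ℂ∖(−∞,0], w_i = w_j, and (1/w₁,…,1/w_{n+m}) ∈ Ω. -/
/-!
With `P(w) = ∏ wₗ^{eₗ}`, the chain rule gives
`∂ₖH(w) = P(w) (eₖ/wₖ ⬝ G(1/w) - wₖ⁻² ⬝ ∂ₖG(1/w))`. The exponents are `eₖ = -a/ρₖ`, so `ρₖeₖ = -a`
does not depend on `k`: where `wᵢ = wⱼ` the `G`-terms cancel in `ρᵢ∂ᵢH - ρⱼ∂ⱼH`, leaving
`-P(w) wⱼ⁻² (ρᵢ∂ᵢG - ρⱼ∂ⱼG)(1/w)`, which vanishes by the cancellation property of `G` at `1/w`.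
-/

open Finset

/-- Partial derivative of `F(w)` in the variable `w i`. -/
noncomputable def pdW {N : ℕ} (F : (Fin N → ℂ) → ℂ) (i : Fin N) (w : Fin N → ℂ) : ℂ :=
  deriv (fun z => F (Function.update w i z)) (w i)

/-- The grading `ρᵢ = 1` for `i ≤ n` (even variables), `ρᵢ = -1/α` for `i > n`
(odd variables). -/
noncomputable def rho (n m : ℕ) (α : ℝ) (i : Fin (n + m)) : ℂ :=
  if (i : ℕ) < n then 1 else -1 / (α : ℂ)

/-- The deformed operator `𝒮ℒᵢ^{(a,b,c)}` acting on functions of the graded variables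
`w₁,…,w_{n+m}`. -/
noncomputable def SLop (n m : ℕ) (α : ℝ) (a b c : ℂ) (F : (Fin (n + m) → ℂ) → ℂ)
    (i : Fin (n + m)) (w : Fin (n + m) → ℂ) : ℂ :=
  rho n m α i * w i * (1 - w i) * pdW (fun v => pdW F i v) i w
    + c * pdW F i w - (a + b + rho n m α i) * w i * pdW F i w
    + (1 / (α : ℂ)) * ∑ j ∈ univ.filter (fun j => j ≠ i),
        (1 / (rho n m α i * rho n m α j)) * (w j / (w i - w j)) *
          (rho n m α i * (1 - w i) * pdW F i w - rho n m α j * (1 - w j) * pdW F j w)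

/-- The transform `H(w) = ∏_{i≤n} wᵢ^{-a} ∏_{j>n} wⱼ^{αa} ⬝ G(1/w₁,…,1/w_{n+m})`,
with principal branch powers. -/
noncomputable def invTrans (n m : ℕ) (α : ℝ) (a : ℂ) (G : (Fin (n + m) → ℂ) → ℂ)
    (w : Fin (n + m) → ℂ) : ℂ :=
  (∏ i : Fin (n + m), w i ^ (if (i : ℕ) < n then -a else (α : ℂ) * a)) *
    G (fun i => (w i)⁻¹)

section InversionTransform

variable {N : ℕ}

theorem hasDerivAt_pdW_of_differentiableAt {F : (Fin N → ℂ) → ℂ} {v : Fin N → ℂ}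
    (hF : DifferentiableAt ℂ F v) (k : Fin N) :
    HasDerivAt (fun z => F (Function.update v k z)) (pdW F k v) (v k) := by
  have hF' : DifferentiableAt ℂ F (Function.update v k (v k)) := by
    rwa [Function.update_eq_self]
  exact (hF'.comp (v k) (hasDerivAt_update v k (v k)).differentiableAt).hasDerivAt

theorem prod_update_cpow (w e : Fin N → ℂ) (k : Fin N) (z : ℂ) :
    ∏ i, Function.update w k z i ^ e i = z ^ e k * ∏ i ∈ univ.erase k, w i ^ e i := by
  rw [← mul_prod_erase univ _ (mem_univ k), Function.update_self]
  congr 1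
  exact prod_congr rfl fun i hi => by rw [Function.update_of_ne (ne_of_mem_erase hi)]

theorem pdW_prod_cpow_mul_comp_inv {G : (Fin N → ℂ) → ℂ} {w : Fin N → ℂ} (e : Fin N → ℂ)
    {k : Fin N} (hwk : w k ∈ Complex.slitPlane)
    (hG : DifferentiableAt ℂ G (fun i => (w i)⁻¹)) :
    pdW (fun u => (∏ i, u i ^ e i) * G (fun i => (u i)⁻¹)) k w
      = (∏ i, w i ^ e i) * (e k * (w k)⁻¹ * G (fun i => (w i)⁻¹)
          - (w k ^ 2)⁻¹ * pdW G k (fun i => (w i)⁻¹)) := by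
  set v : Fin N → ℂ := fun i => (w i)⁻¹
  set C := ∏ i ∈ univ.erase k, w i ^ e i
  have hwk0 : w k ≠ 0 := Complex.slitPlane_ne_zero hwk
  have hslice : (fun z => (∏ i, Function.update w k z i ^ e i)
      * G (fun i => (Function.update w k z i)⁻¹))
      = fun z => z ^ e k * C * G (Function.update v k z⁻¹) := by
    funext z
    rw [prod_update_cpow]
    congr 2
    funext l
    exact Function.apply_update (fun _ x => x⁻¹) w k z l
  have hinv : HasDerivAt (fun z => G (Function.update v k z⁻¹))
      (pdW G k v * -(w k ^ 2)⁻¹) (w k) :=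
    (hasDerivAt_pdW_of_differentiableAt hG k).comp (h₂ := fun z => G (Function.update v k z))
      (w k) (hasDerivAt_inv hwk0)
  have hpow : HasDerivAt (fun z : ℂ => z ^ e k) (e k * w k ^ (e k - 1) * 1) (w k) :=
    (hasDerivAt_id (w k)).cpow_const hwk
  have hderiv : HasDerivAt (fun z => z ^ e k * C * G (Function.update v k z⁻¹)) _ (w k) :=
    (hpow.mul_const C).mul hinv
  have hv : Function.update v k (w k)⁻¹ = v := Function.update_eq_self k v
  rw [pdW, hslice, hderiv.deriv, hv, ← mul_prod_erase univ _ (mem_univ k),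
    Complex.cpow_sub _ _ hwk0, Complex.cpow_one]
  field_simp
  ring

end InversionTransform

theorem rho_mul_invTrans_exponent {n m : ℕ} {α : ℝ} (hα : α ≠ 0) (a : ℂ) (k : Fin (n + m)) :
    rho n m α k * (if (k : ℕ) < n then -a else (α : ℂ) * a) = -a := by
  have hα' : (α : ℂ) ≠ 0 := by exact_mod_cast hα
  unfold rho
  split_ifs
  · ring
  · field_simp

/-- if `G` satisfies the cancellation property
`(ρᵢ ∂G/∂wᵢ - ρⱼ ∂G/∂wⱼ)|_{wᵢ=wⱼ} = 0` for variables of opposite parity on `Ω`, then so does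
`H(w) = ∏ wᵢ^{-a/ρᵢ} G(1/w)`. -/
theorem stmt7 (n m : ℕ) (α : ℝ) (hα : 0 < α) (a : ℂ)
    (Ω : Set (Fin (n + m) → ℂ)) (hΩ : IsOpen Ω)
    (G : (Fin (n + m) → ℂ) → ℂ) (hG : DifferentiableOn ℂ G Ω)
    (hcan : ∀ w ∈ Ω, ∀ i j : Fin (n + m), (i : ℕ) < n → n ≤ (j : ℕ) → w i = w j →
      rho n m α i * pdW G i w - rho n m α j * pdW G j w = 0)
    (w : Fin (n + m) → ℂ)
    (hw : ∀ i, w i ∈ Complex.slitPlane)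
    (hmem : (fun i => (w i)⁻¹) ∈ Ω)
    (i j : Fin (n + m)) (hi : (i : ℕ) < n) (hj : n ≤ (j : ℕ)) (hij : w i = w j) :
    rho n m α i * pdW (invTrans n m α a G) i w
      - rho n m α j * pdW (invTrans n m α a G) j w = 0 := by
  set v : Fin (n + m) → ℂ := fun k => (w k)⁻¹
  set e : Fin (n + m) → ℂ := fun k => if (k : ℕ) < n then -a else (α : ℂ) * a
  have hGv : DifferentiableAt ℂ G v := hG.differentiableAt (hΩ.mem_nhds hmem)
  have hGcan := hcan v hmem i j hi hj (by simp only [v, hij])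
  have hei := rho_mul_invTrans_exponent hα.ne' a i
  have hej := rho_mul_invTrans_exponent hα.ne' a j
  have hH : ∀ k, pdW (invTrans n m α a G) k w
      = (∏ l, w l ^ e l) * (e k * (w k)⁻¹ * G v - (w k ^ 2)⁻¹ * pdW G k v) :=
    fun k => pdW_prod_cpow_mul_comp_inv e (hw k) hGv
  rw [hH, hH, hij]
  linear_combination ((∏ l, w l ^ e l) * (w j)⁻¹ * G v) * (hei - hej)
    - (∏ l, w l ^ e l) * (w j ^ 2)⁻¹ * hGcan
end

section
/- (James's lemma.) Let F be a field and n ≥ 1 an integer. In the polynomial ring F[y₁,…,y_n], let r_k denote the k-th elementary symmetric polynomial in y₁,…,y_n for 1 ≤ k ≤ n, with r₀ = 1, and let r_k^{(1)} denote the k-th elementary symmetric polynomial in y₂,…,y_n for 0 ≤ k ≤ n−1 (with r₀^{(1)} = 1). Let λ₀,…,λ_{n−1} ∈ F[X₁,…,X_n] be polynomials in n indeterminates. If Σ_{k=0}^{n−1} λ_k(r₁,…,r_n) · r_k^{(1)} = 0 in F[y₁,…,y_n], then λ_k(r₁,…,r_n) = 0 for every k = 0, 1, …, n−1. -/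
/-!
Write `r_k^{(i)}` for the `k`-th elementary symmetric polynomial in the variables other than
`y_i`. Since `∏_{j ≠ i} (1 + y_j t) = ∏_j (1 + y_j t) / (1 + y_i t)`, one has
`r_k^{(i)} = ∑_{j ≤ k} (-y_i)^j r_{k-j}`, so the matrix `(r_k^{(i)})_{i,k}` is the Vandermonde
matrix of `-y_1, …, -y_n` times a unitriangular matrix, and its determinant is nonzero.
The coefficients `a_k = λ_k(r_1, …, r_n)` are symmetric, so permuting the variables turns the
hypothesis `∑_k a_k r_k^{(1)} = 0` into `∑_k a_k r_k^{(i)} = 0` for every `i`; hence `a = 0`.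
-/

open Finset

theorem Multiset.esymm_cons_succ {R : Type*} [CommSemiring R] (a : R) (s : Multiset R) (k : ℕ) :
    (a ::ₘ s).esymm (k + 1) = s.esymm (k + 1) + a * s.esymm k := by
  simp [Multiset.esymm, Multiset.powersetCard_cons, Multiset.sum_map_mul_left]

namespace MvPolynomial

section esymmErase

variable {σ R : Type*} [Fintype σ] [DecidableEq σ] [CommRing R]

variable (R) in
noncomputable def esymmErase (i : σ) (k : ℕ) : MvPolynomial σ R :=
  ∑ T ∈ powersetCard k (univ.erase i), ∏ j ∈ T, X j

theorem esymm_succ_eq_esymmErase_add (i : σ) (k : ℕ) :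
    esymm σ R (k + 1) = esymmErase R i (k + 1) + X i * esymmErase R i k := by
  simp only [esymmErase, esymm_eq_multiset_esymm, ← esymm_map_val]
  rw [← insert_erase (mem_univ i), insert_val_of_notMem (notMem_erase i univ),
    Multiset.map_cons, Multiset.esymm_cons_succ, erase_insert_eq_erase, erase_idem]

theorem esymmErase_eq_sum (i : σ) (k : ℕ) :
    esymmErase R i k = ∑ j ∈ range (k + 1), (-X i) ^ j * esymm σ R (k - j) := by
  induction k with
  | zero => simp [esymmErase]
  | succ k ih =>
    rw [sum_range_succ', eq_sub_of_add_eq (esymm_succ_eq_esymmErase_add i k).symm, ih, mul_sum]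
    simp only [pow_succ', Nat.add_sub_add_right, pow_zero, one_mul, Nat.sub_zero, neg_mul,
      mul_assoc, sum_neg_distrib, sub_eq_add_neg, add_comm]

theorem rename_esymmErase (e : Equiv.Perm σ) (i : σ) (k : ℕ) :
    rename e (esymmErase R i k) = esymmErase R (e i) k := by
  simp [esymmErase_eq_sum, rename_esymm]

end esymmErase

section Matrix

variable {R : Type*} [CommRing R] {n : ℕ}

theorem of_esymmErase_eq_vandermonde_mul :
    Matrix.of (fun i k : Fin n => esymmErase R i k) =
      Matrix.vandermonde (fun i => -X i) *
        Matrix.of (fun j k : Fin n => if (j : ℕ) ≤ k then esymm (Fin n) R (k - j) else 0) := by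
  refine Matrix.ext fun i k => ?_
  have hle : (range n).filter (· ≤ (k : ℕ)) = range (k + 1) := by
    ext j; simp only [mem_filter, mem_range]; omega
  simp only [Matrix.of_apply, Matrix.mul_apply, Matrix.vandermonde_apply, mul_ite, mul_zero,
    esymmErase_eq_sum]
  rw [Fin.sum_univ_eq_sum_range
    (fun j => if j ≤ (k : ℕ) then (-X i) ^ j * esymm (Fin n) R (k - j) else 0), ← sum_filter, hle]

theorem det_of_esymmErase_ne_zero [IsDomain R] :
    (Matrix.of (fun i k : Fin n => esymmErase R i k)).det ≠ 0 := by
  have hU : (Matrix.of (fun j k : Fin n =>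
      if (j : ℕ) ≤ k then esymm (Fin n) R (k - j) else 0)).det = 1 := by
    rw [Matrix.det_of_isUpperTriangular]
    · simp
    · intro j k hkj
      exact if_neg (not_le.mpr (Fin.lt_def.mp hkj))
  rw [of_esymmErase_eq_vandermonde_mul, Matrix.det_mul, hU, mul_one,
    Matrix.det_vandermonde_ne_zero_iff]
  exact neg_injective.comp (X_injective (σ := Fin n) (R := R))

end Matrix

theorem IsSymmetric.aeval {σ τ R : Type*} [CommSemiring R] {f : τ → MvPolynomial σ R}
    (hf : ∀ j, (f j).IsSymmetric) (p : MvPolynomial τ R) : (aeval f p).IsSymmetric := fun e => by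
  rw [comp_aeval_apply]
  simp only [hf _ e]

theorem eq_zero_of_sum_mul_esymmErase_eq_zero {R : Type*} [CommRing R] [IsDomain R] {n : ℕ}
    {a : Fin n → MvPolynomial (Fin n) R} (ha : ∀ k, (a k).IsSymmetric) (i₀ : Fin n)
    (h : ∑ k, a k * esymmErase R i₀ k = 0) : a = 0 := by
  apply Matrix.eq_zero_of_mulVec_eq_zero det_of_esymmErase_ne_zero
  funext i
  have := congrArg (rename (Equiv.swap i₀ i)) h
  simp only [map_sum, map_mul, rename_esymmErase, Equiv.swap_apply_left, ha _ _, map_zero] at this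
  simpa [Matrix.mulVec, dotProduct, mul_comm] using this

end MvPolynomial

/-- James's lemma: if `Σ_{k=0}^{n-1} λ_k(r₁,…,r_n)·r_k^{(1)} = 0` in
`F[y₁,…,y_n]`, where `r_j` is the `j`-th elementary symmetric polynomial in `y₁,…,y_n` and
`r_k^{(1)}` the `k`-th elementary symmetric polynomial in `y₂,…,y_n`, then each
`λ_k(r₁,…,r_n) = 0`. -/
theorem stmt9 (F : Type*) [Field F] (n : ℕ) (hn : 1 ≤ n)
    (lam : Fin n → MvPolynomial (Fin n) F)
    (hsum : ∑ k : Fin n,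
        (MvPolynomial.aeval fun j : Fin n => MvPolynomial.esymm (Fin n) F ((j : ℕ) + 1))
            (lam k) *
          ∑ T ∈ Finset.powersetCard (k : ℕ) ((univ : Finset (Fin n)).erase ⟨0, hn⟩),
            ∏ i ∈ T, MvPolynomial.X i
        = 0) :
    ∀ k : Fin n,
      (MvPolynomial.aeval fun j : Fin n => MvPolynomial.esymm (Fin n) F ((j : ℕ) + 1))
        (lam k) = 0 :=
  congrFun <| MvPolynomial.eq_zero_of_sum_mul_esymmErase_eq_zero
    (fun k => .aeval (fun _ => MvPolynomial.esymm_isSymmetric _ _ _) (lam k)) _ hsum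
end

section
/- Let α > 0 be real and M ≥ 1 an integer. Let κ be a partition with length ℓ (number of nonzero parts) and largest part κ₁. Then: (i) the generalized Pochhammer symbol [−M]_κ^{(α)} is nonzero if κ₁ ≤ M, and equals zero if κ₁ > M; (ii) [M/α]_κ^{(α)} is nonzero if ℓ ≤ M, and equals zero if ℓ > M. -/
open Finset

/-- The generalized Pochhammer symbol
`[x]_κ^{(α)} = ∏_{i≥1} ∏_{j=0}^{κ_i-1} (x - (i-1)/α + j)`, for a 0-indexed finitely supported
weakly decreasing sequence `κ`. -/
noncomputable def genPoch (α x : ℝ) (κ : ℕ → ℕ) : ℝ :=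
  ∏ᶠ i : ℕ, ∏ j ∈ Finset.range (κ i), (x - (i : ℝ) / α + (j : ℝ))

/-! A weakly decreasing, finitely supported `κ` is nonzero exactly on its first `ℓ(κ)` entries,
and `[x]_κ^{(α)}` vanishes exactly when one of its finitely many linear factors
`x - i/α + j` (`j < κ i`) does. For `x = -M` every factor with `j < M` is negative, while the
factor `(i, j) = (0, M)` vanishes; for `x = M/α` every factor in a row `i < M` is positive,
while the factor `(M, 0)` vanishes. -/

theorem Antitone.support_eq_Iio_ncard {κ : ℕ → ℕ} (hdec : Antitone κ)
    (hfin : (Function.support κ).Finite) :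
    Function.support κ = Set.Iio (Function.support κ).ncard := by
  have hlower : IsLowerSet (Function.support κ) := fun i j hji hi =>
    Nat.pos_iff_ne_zero.mp ((Nat.pos_of_ne_zero hi).trans_le (hdec hji))
  obtain hU | ⟨n, hn⟩ := hlower.eq_univ_or_Iio
  · exact absurd (hU ▸ hfin) Set.infinite_univ
  · rw [hn, Set.ncard_Iio_nat]

theorem genPoch_eq_zero_iff {α x : ℝ} {κ : ℕ → ℕ} (hfin : (Function.support κ).Finite) :
    genPoch α x κ = 0 ↔ ∃ i j, j < κ i ∧ x - (i : ℝ) / α + (j : ℝ) = 0 := by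
  have hsub : Function.mulSupport
      (fun i => ∏ j ∈ range (κ i), (x - (i : ℝ) / α + (j : ℝ))) ⊆ hfin.toFinset := by
    intro i hi
    simp only [Set.Finite.coe_toFinset, Function.mem_support]
    intro h0
    simp [h0] at hi
  rw [genPoch, finprod_eq_prod_of_mulSupport_subset _ hsub, prod_eq_zero_iff]
  simp only [prod_eq_zero_iff, mem_range, Set.Finite.mem_toFinset, Function.mem_support]
  exact ⟨fun ⟨i, _, j, hj, h⟩ => ⟨i, j, hj, h⟩,
    fun ⟨i, j, hj, h⟩ => ⟨i, (Nat.zero_lt_of_lt hj).ne', j, hj, h⟩⟩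

theorem genPoch_neg_natCast_eq_zero_iff {α : ℝ} (hα : 0 ≤ α) (M : ℕ) {κ : ℕ → ℕ}
    (hdec : Antitone κ) (hfin : (Function.support κ).Finite) :
    genPoch α (-(M : ℝ)) κ = 0 ↔ M < κ 0 := by
  rw [genPoch_eq_zero_iff hfin]
  constructor
  · rintro ⟨i, j, hj, h⟩
    by_contra! hκM
    have hjM : (j : ℝ) < M := by exact_mod_cast hj.trans_le ((hdec i.zero_le).trans hκM)
    have : 0 ≤ (i : ℝ) / α := by positivity
    linarith
  · exact fun hMκ => ⟨0, M, hMκ, by simp⟩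

theorem genPoch_natCast_div_eq_zero_iff {α : ℝ} (hα : 0 < α) (M : ℕ) {κ : ℕ → ℕ}
    (hdec : Antitone κ) (hfin : (Function.support κ).Finite) :
    genPoch α ((M : ℝ) / α) κ = 0 ↔ M < (Function.support κ).ncard := by
  have hsupp (i : ℕ) : κ i ≠ 0 ↔ i < (Function.support κ).ncard :=
    Set.ext_iff.mp (hdec.support_eq_Iio_ncard hfin) i
  rw [genPoch_eq_zero_iff hfin]
  constructor
  · rintro ⟨i, j, hj, h⟩
    by_contra! hℓM
    have hiM : (i : ℝ) < M :=
      by exact_mod_cast ((hsupp i).mp (Nat.zero_lt_of_lt hj).ne').trans_le hℓM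
    have : 0 < (M : ℝ) / α - (i : ℝ) / α := by
      rw [div_sub_div_same]
      exact div_pos (by linarith) hα
    have : (0 : ℝ) ≤ j := j.cast_nonneg
    linarith
  · exact fun hMℓ => ⟨M, 0, Nat.pos_of_ne_zero ((hsupp M).mpr hMℓ), by simp⟩

theorem stmt10_general (α : ℝ) (hα : 0 < α) (M : ℕ) (κ : ℕ → ℕ)
    (hdec : Antitone κ) (hfin : (Function.support κ).Finite) :
    ((κ 0 ≤ M → genPoch α (-(M : ℝ)) κ ≠ 0) ∧
      (M < κ 0 → genPoch α (-(M : ℝ)) κ = 0)) ∧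
    ((Set.ncard (Function.support κ) ≤ M → genPoch α ((M : ℝ) / α) κ ≠ 0) ∧
      (M < Set.ncard (Function.support κ) → genPoch α ((M : ℝ) / α) κ = 0)) := by
  have hneg := genPoch_neg_natCast_eq_zero_iff hα.le M hdec hfin
  have hdiv := genPoch_natCast_div_eq_zero_iff hα M hdec hfin
  exact ⟨⟨fun h => hneg.not.mpr h.not_gt, hneg.mpr⟩, ⟨fun h => hdiv.not.mpr h.not_gt, hdiv.mpr⟩⟩

/-- for `α > 0` and a positive integer `M`:
(i) `[-M]_κ^{(α)} ≠ 0` if `κ₁ ≤ M`, and `[-M]_κ^{(α)} = 0` if `κ₁ > M`;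
(ii) `[M/α]_κ^{(α)} ≠ 0` if `ℓ(κ) ≤ M`, and `[M/α]_κ^{(α)} = 0` if `ℓ(κ) > M`. -/
theorem stmt10 (α : ℝ) (hα : 0 < α) (M : ℕ) (hM : 1 ≤ M) (κ : ℕ → ℕ)
    (hdec : Antitone κ) (hfin : (Function.support κ).Finite) :
    ((κ 0 ≤ M → genPoch α (-(M : ℝ)) κ ≠ 0) ∧
      (M < κ 0 → genPoch α (-(M : ℝ)) κ = 0)) ∧
    ((Set.ncard (Function.support κ) ≤ M → genPoch α ((M : ℝ) / α) κ ≠ 0) ∧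
      (M < Set.ncard (Function.support κ) → genPoch α ((M : ℝ) / α) κ = 0)) :=
  stmt10_general α hα M κ hdec hfin
end

section
/- Let n, m ≥ 0 be integers, α > 0 real, and a, b, c ∈ ℂ. Let F be a function twice complex-differentiable at a point (t,s) ∈ ℂⁿ × ℂ^m at which t₁,…,t_n are pairwise distinct, s₁,…,s_m are pairwise distinct, and t_i ≠ s_j for all i, j. If F satisfies all n+m equations of the deformed hypergeometric system with n even variables t, m odd variables s, and parameters (α, a, b, c) at (t,s), then the swapped function G(s,t) := F(t,s) satisfies all m+n equations of the deformed hypergeometric system with m even variables (the s's), n odd variables (the t's), and parameters (1/α, −αa, −αb, −αc) at (s,t). -/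
open Finset

/-- The deformed hypergeometric system with parameters `(α, a, b, c)` for a function
`F(t₁,…,t_n,s₁,…,s_m)` (first group of variables 'even', second 'odd'), at `(t,s)`. -/
def DeformedSystemAt (n m : ℕ) (α : ℝ) (a b c : ℂ)
    (F : (Fin n → ℂ) → (Fin m → ℂ) → ℂ) (t : Fin n → ℂ) (s : Fin m → ℂ) : Prop :=
  (∀ i : Fin n,
    t i * (1 - t i) * pdT (pdT F i) i t s + (c - (a + b + 1) * t i) * pdT F i t s
      - a * b * F t s
      + (1 / (α : ℂ)) * ∑ k ∈ univ.filter (fun k => k ≠ i),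
          t k / (t i - t k) * ((1 - t i) * pdT F i t s - (1 - t k) * pdT F k t s)
      - ∑ k : Fin m, s k / (t i - s k) *
          ((1 - t i) * pdT F i t s + (1 / (α : ℂ)) * (1 - s k) * pdS F k t s) = 0)
  ∧ (∀ j : Fin m,
    -(1 / (α : ℂ)) * s j * (1 - s j) * pdS (pdS F j) j t s
      + (c - (a + b + 1 - (1 + 1 / (α : ℂ))) * s j) * pdS F j t s
      + (α : ℂ) * a * b * F t s
      - ∑ k ∈ univ.filter (fun k => k ≠ j),
          s k / (s j - s k) * ((1 - s j) * pdS F j t s - (1 - s k) * pdS F k t s)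
      + ∑ k : Fin n, t k / (s j - t k) *
          ((1 / (α : ℂ)) * (1 - s j) * pdS F j t s + (1 - t k) * pdT F k t s) = 0)

/-! Swapping the two groups of variables and passing to `(1/α, -αa, -αb, -αc)` multiplies
each equation of the deformed hypergeometric system by `-α`: the duality is a pointwise
algebraic identity between the left-hand sides. -/

section Residuals

variable {n m : ℕ} (α : ℝ) (a b c : ℂ) (F : (Fin n → ℂ) → (Fin m → ℂ) → ℂ)
  (t : Fin n → ℂ) (s : Fin m → ℂ)

noncomputable def evenResidual (i : Fin n) : ℂ :=
  t i * (1 - t i) * pdT (pdT F i) i t s + (c - (a + b + 1) * t i) * pdT F i t s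
    - a * b * F t s
    + (1 / (α : ℂ)) * ∑ k ∈ univ.filter (fun k => k ≠ i),
        t k / (t i - t k) * ((1 - t i) * pdT F i t s - (1 - t k) * pdT F k t s)
    - ∑ k : Fin m, s k / (t i - s k) *
        ((1 - t i) * pdT F i t s + (1 / (α : ℂ)) * (1 - s k) * pdS F k t s)

noncomputable def oddResidual (j : Fin m) : ℂ :=
  -(1 / (α : ℂ)) * s j * (1 - s j) * pdS (pdS F j) j t s
    + (c - (a + b + 1 - (1 + 1 / (α : ℂ))) * s j) * pdS F j t s
    + (α : ℂ) * a * b * F t s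
    - ∑ k ∈ univ.filter (fun k => k ≠ j),
        s k / (s j - s k) * ((1 - s j) * pdS F j t s - (1 - s k) * pdS F k t s)
    + ∑ k : Fin n, t k / (s j - t k) *
        ((1 / (α : ℂ)) * (1 - s j) * pdS F j t s + (1 - t k) * pdT F k t s)

theorem deformedSystemAt_iff :
    DeformedSystemAt n m α a b c F t s ↔
      (∀ i, evenResidual α a b c F t s i = 0) ∧ (∀ j, oddResidual α a b c F t s j = 0) :=
  Iff.rfl

end Residuals

@[simp]
theorem pdT_swap {n m : ℕ} (F : (Fin n → ℂ) → (Fin m → ℂ) → ℂ) (j : Fin m) :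
    pdT (Function.swap F) j = Function.swap (pdS F j) :=
  rfl

@[simp]
theorem pdS_swap {n m : ℕ} (F : (Fin n → ℂ) → (Fin m → ℂ) → ℂ) (i : Fin n) :
    pdS (Function.swap F) i = Function.swap (pdT F i) :=
  rfl

section Duality

variable {n m : ℕ} {α : ℝ} (hα : α ≠ 0) (a b c : ℂ) (F : (Fin n → ℂ) → (Fin m → ℂ) → ℂ)
  (t : Fin n → ℂ) (s : Fin m → ℂ)
include hα

theorem evenResidual_swap (j : Fin m) :
    evenResidual (1 / α) (-α * a) (-α * b) (-α * c) (Function.swap F) s t j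
      = -α * oddResidual α a b c F t s j := by
  have hα' : (α : ℂ) ≠ 0 := by exact_mod_cast hα
  -- `field_simp` does not clear denominators under a sum, so `α` is moved inside by hand.
  have hsum : ∑ k : Fin n, t k / (s j - t k) *
        ((1 - s j) * pdS F j t s + α * (1 - t k) * pdT F k t s)
      = α * ∑ k : Fin n, t k / (s j - t k) *
        ((1 / (α : ℂ)) * (1 - s j) * pdS F j t s + (1 - t k) * pdT F k t s) := by
    rw [mul_sum]
    refine sum_congr rfl fun k _ => ?_
    field_simp
  simp only [evenResidual, oddResidual, pdT_swap, pdS_swap, Function.swap,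
    Complex.ofReal_div, Complex.ofReal_one, one_div_one_div, hsum]
  field_simp
  ring

theorem oddResidual_swap (i : Fin n) :
    oddResidual (1 / α) (-α * a) (-α * b) (-α * c) (Function.swap F) s t i
      = -α * evenResidual α a b c F t s i := by
  have hα' : (α : ℂ) ≠ 0 := by exact_mod_cast hα
  have hsum : ∑ k : Fin m, s k / (t i - s k) *
        (α * (1 - t i) * pdT F i t s + (1 - s k) * pdS F k t s)
      = α * ∑ k : Fin m, s k / (t i - s k) *
        ((1 - t i) * pdT F i t s + (1 / (α : ℂ)) * (1 - s k) * pdS F k t s) := by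
    rw [mul_sum]
    refine sum_congr rfl fun k _ => ?_
    field_simp
  simp only [evenResidual, oddResidual, pdT_swap, pdS_swap, Function.swap,
    Complex.ofReal_div, Complex.ofReal_one, one_div_one_div, hsum]
  field_simp
  ring

theorem DeformedSystemAt.swap (hsys : DeformedSystemAt n m α a b c F t s) :
    DeformedSystemAt m n (1 / α) (-α * a) (-α * b) (-α * c) (Function.swap F) s t := by
  rw [deformedSystemAt_iff] at hsys ⊢
  obtain ⟨heven, hodd⟩ := hsys
  refine ⟨fun j => ?_, fun i => ?_⟩
  · rw [evenResidual_swap hα, hodd j, mul_zero]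
  · rw [oddResidual_swap hα, heven i, mul_zero]

end Duality

theorem stmt13_general (n m : ℕ) (α : ℝ) (hα : 0 < α) (a b c : ℂ)
    (F : (Fin n → ℂ) → (Fin m → ℂ) → ℂ) (t : Fin n → ℂ) (s : Fin m → ℂ)
    (hsys : DeformedSystemAt n m α a b c F t s) :
    DeformedSystemAt m n (1 / α) (-(α : ℂ) * a) (-(α : ℂ) * b) (-(α : ℂ) * c)
      (fun s' t' => F t' s') s t :=
  hsys.swap hα.ne'

/-- duality: if `F` satisfies the deformed hypergeometric system with `n`
even and `m` odd variables and parameters `(α, a, b, c)` at `(t,s)`, then the swapped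
function `G(s,t) = F(t,s)` satisfies the system with `m` even and `n` odd variables and
parameters `(1/α, -αa, -αb, -αc)` at `(s,t)`. -/
theorem stmt13 (n m : ℕ) (α : ℝ) (hα : 0 < α) (a b c : ℂ)
    (F : (Fin n → ℂ) → (Fin m → ℂ) → ℂ) (t : Fin n → ℂ) (s : Fin m → ℂ)
    (hdiff : ContDiffAt ℂ 2 (fun p : (Fin n → ℂ) × (Fin m → ℂ) => F p.1 p.2) (t, s))
    (ht : Function.Injective t) (hs : Function.Injective s)
    (hts : ∀ i j, t i ≠ s j)
    (hsys : DeformedSystemAt n m α a b c F t s) :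
    DeformedSystemAt m n (1 / α) (-(α : ℂ) * a) (-(α : ℂ) * b) (-(α : ℂ) * c)
      (fun s' t' => F t' s') s t :=
  stmt13_general n m α hα a b c F t s hsys
end
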